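/- Let (X,d) be a metric space equipped with a closed partial order that is monotone normal, i.e. for every closed upper set A and every closed lower set B with A ∩ B = ∅ there exist an open upper set U ⊇ A and an open lower set V ⊇ B with U ∩ V = ∅. Then for tight Borel probability measures μ, ν on X, μ ≤ ν in the stochastic order if and only if ∫ f dμ ≤ ∫ f dν for every continuous bounded monotone f : X → [0,∞). -/

import Mathlib

open MeasureTheory
open scoped ENNReal

/-- A Borel measure on a metric space is tight (inner regular) if every Borel set can be
approximated in measure from inside by compact subsets. -/
def MeasureIsTight {X : Type*} [TopologicalSpace X] [MeasurableSpace X]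
    (μ : Measure X) : Prop :=
  ∀ A : Set X, MeasurableSet A → ∀ ε : ℝ≥0∞, 0 < ε → ∃ K ⊆ A, IsCompact K ∧ μ A < μ K + ε

/-!
If `μ(U) ≤ ν(U)` on open upper sets, the layer-cake formula `∫ f = ∫₀^∞ μ {f > t} dt` gives the
integral inequality, since the superlevel sets of a continuous monotone `f` are open upper sets.
Conversely, by tightness it suffices to bound `μ K` for compact `K ⊆ U`. As the order is closed,
the upper closure `↑K` is closed, and monotone normality lets Urysohn's construction run through
upper sets only, producing a continuous monotone `f` with `1_{↑K} ≤ f ≤ 1_U`; hence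
`μ K ≤ ∫ f dμ ≤ ∫ f dν ≤ ν U`.
-/

open Set

theorem IsCompact.isClosed_upperClosure {X : Type*} [TopologicalSpace X] [Preorder X]
    [OrderClosedTopology X] {K : Set X} (hK : IsCompact K) :
    IsClosed (upperClosure K : Set X) := by
  have : CompactSpace K := isCompact_iff_compactSpace.mp hK
  have hgraph : IsClosed {p : K × X | (p.1 : X) ≤ p.2} :=
    isClosed_le (continuous_subtype_val.comp continuous_fst) continuous_snd
  convert isClosedMap_snd_of_compactSpace _ hgraph using 1
  ext y
  simp [mem_upperClosure]

def IsMonotoneNormal (X : Type*) [TopologicalSpace X] [Preorder X] : Prop :=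
  ∀ A B : Set X, IsClosed A → IsUpperSet A → IsClosed B → IsLowerSet B → A ∩ B = ∅ →
    ∃ U V : Set X, IsOpen U ∧ IsUpperSet U ∧ A ⊆ U ∧ IsOpen V ∧ IsLowerSet V ∧ B ⊆ V ∧ U ∩ V = ∅

namespace IsMonotoneNormal

variable {X : Type*} [TopologicalSpace X] [Preorder X]

theorem exists_isOpen_isClosed_between (hX : IsMonotoneNormal X) {C U : Set X}
    (hC : IsClosed C) (hCu : IsUpperSet C) (hU : IsOpen U) (hUu : IsUpperSet U) (hCU : C ⊆ U) :
    ∃ V W : Set X, IsOpen V ∧ IsUpperSet V ∧ IsClosed W ∧ IsUpperSet W ∧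
      C ⊆ V ∧ V ⊆ W ∧ W ⊆ U := by
  obtain ⟨V, V', hV, hVu, hCV, hV', hV'l, hUV', hdisj⟩ :=
    hX C Uᶜ hC hCu hU.isClosed_compl hUu.compl (by rwa [← sdiff_eq, sdiff_eq_empty])
  exact ⟨V, V'ᶜ, hV, hVu, hV'.isClosed_compl, hV'l.compl, hCV,
    subset_compl_iff_disjoint_right.mpr (disjoint_iff_inter_eq_empty.mpr hdisj),
    compl_subset_comm.mpr hUV'⟩

end IsMonotoneNormal

namespace Urysohns.CU

variable {X : Type*} [TopologicalSpace X] [Preorder X] {P : Set X → Set X → Prop}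

theorem approx_antitone (hP : ∀ C U, P C U → IsUpperSet U) (c : CU P) (n : ℕ) :
    Antitone (c.approx n) := by
  induction n generalizing c with
  | zero =>
    intro x y hxy
    by_cases hy : y ∈ c.Uᶜ
    · simp [approx, hy, (hP _ _ c.P_C_U).compl hxy hy]
    · simp only [approx, indicator_of_notMem hy]
      exact indicator_nonneg (fun _ _ => zero_le_one) _
  | succ n ih => exact fun x y hxy => midpoint_le_midpoint (ih c.left hxy) (ih c.right hxy)

theorem lim_antitone (hP : ∀ C U, P C U → IsUpperSet U) (c : CU P) : Antitone c.lim :=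
  fun _ _ hxy => ciSup_mono (c.bddAbove_range_approx _) fun n => c.approx_antitone hP n hxy

end Urysohns.CU

theorem IsMonotoneNormal.exists_continuous_monotone_one_zero {X : Type*} [TopologicalSpace X]
    [Preorder X] (hX : IsMonotoneNormal X) {C U : Set X} (hC : IsClosed C) (hCu : IsUpperSet C)
    (hU : IsOpen U) (hUu : IsUpperSet U) (hCU : C ⊆ U) :
    ∃ f : X → ℝ, Continuous f ∧ Monotone f ∧ (∀ x, f x ∈ Icc (0 : ℝ) 1) ∧
      EqOn f 1 C ∧ EqOn f 0 Uᶜ := by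
  -- Run the Urysohn construction through pairs `(C, U)` with `U` upper and `C` inside a closed
  -- upper subset of `U`: monotone normality can then always split such a pair.
  let P : Set X → Set X → Prop := fun C U =>
    IsUpperSet U ∧ ∃ W, IsClosed W ∧ IsUpperSet W ∧ C ⊆ W ∧ W ⊆ U
  have hsplit : ∀ {c u : Set X}, IsClosed c → P c u → IsOpen u → c ⊆ u →
      ∃ v, IsOpen v ∧ c ⊆ v ∧ closure v ⊆ u ∧ P c v ∧ P (closure v) u := by
    rintro c u - ⟨hu, W, hW, hWu, hcW, hWu'⟩ hu' -
    obtain ⟨v, w, hv, hvu, hw, hwu, hWv, hvw, hwu'⟩ :=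
      hX.exists_isOpen_isClosed_between hW hWu hu' hu hWu'
    have hcl : closure v ⊆ w := closure_minimal hvw hw
    exact ⟨v, hv, hcW.trans hWv, hcl.trans hwu', ⟨hvu, W, hW, hWu, hcW, hWv⟩,
      ⟨hu, w, hw, hwu, hcl, hwu'⟩⟩
  let c : Urysohns.CU P := ⟨C, U, ⟨hUu, C, hC, hCu, subset_rfl, hCU⟩, hC, hU, hCU, hsplit⟩
  refine ⟨1 - c.lim, continuous_const.sub c.continuous_lim,
    fun x y hxy => sub_le_sub_left (c.lim_antitone (fun _ _ h => h.1) hxy) 1, fun x => ?_,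
    fun x hx => by simp [c.lim_of_mem_C x hx], fun x hx => by simp [c.lim_of_notMem_U x hx]⟩
  have := c.lim_mem_Icc x
  simp only [mem_Icc, Pi.sub_apply, Pi.one_apply] at this ⊢
  constructor <;> linarith

section StochasticOrder

variable {X : Type*} [TopologicalSpace X] [MeasurableSpace X] [OpensMeasurableSpace X]
  {μ ν : Measure X}

theorem integrable_of_continuous_of_bound [IsFiniteMeasure μ] {f : X → ℝ} (hf : Continuous f)
    (hnn : 0 ≤ f) {M : ℝ} (hM : ∀ x, f x ≤ M) : Integrable f μ :=
  .of_bound hf.aestronglyMeasurable M (.of_forall fun x => by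
    rw [Real.norm_of_nonneg (hnn x)]; exact hM x)

variable [Preorder X]

theorem lintegral_ofReal_le_of_forall_isUpperSet
    (h : ∀ U : Set X, IsOpen U → IsUpperSet U → μ U ≤ ν U) {f : X → ℝ} (hf : Continuous f)
    (hmono : Monotone f) (hnn : 0 ≤ f) :
    ∫⁻ x, ENNReal.ofReal (f x) ∂μ ≤ ∫⁻ x, ENNReal.ofReal (f x) ∂ν := by
  rw [lintegral_eq_lintegral_meas_lt μ (.of_forall hnn) hf.measurable.aemeasurable,
    lintegral_eq_lintegral_meas_lt ν (.of_forall hnn) hf.measurable.aemeasurable]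
  exact lintegral_mono fun t =>
    h _ (isOpen_Ioi.preimage hf) fun _ _ hab ha => ha.trans_le (hmono hab)

theorem integral_le_integral_of_forall_isUpperSet [IsFiniteMeasure μ] [IsFiniteMeasure ν]
    (h : ∀ U : Set X, IsOpen U → IsUpperSet U → μ U ≤ ν U) {f : X → ℝ} (hf : Continuous f)
    (hmono : Monotone f) (hnn : 0 ≤ f) {M : ℝ} (hM : ∀ x, f x ≤ M) :
    ∫ x, f x ∂μ ≤ ∫ x, f x ∂ν := by
  rw [← ENNReal.ofReal_le_ofReal_iff (integral_nonneg hnn),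
    ofReal_integral_eq_lintegral_ofReal (integrable_of_continuous_of_bound hf hnn hM)
      (.of_forall hnn),
    ofReal_integral_eq_lintegral_ofReal (integrable_of_continuous_of_bound hf hnn hM)
      (.of_forall hnn)]
  exact lintegral_ofReal_le_of_forall_isUpperSet h hf hmono hnn

theorem measure_le_of_forall_integral_le (hX : IsMonotoneNormal X) [IsFiniteMeasure μ]
    [IsFiniteMeasure ν]
    (h : ∀ f : X → ℝ, Continuous f → Monotone f → (∀ x, 0 ≤ f x) →
      (∃ M : ℝ, ∀ x, f x ≤ M) → ∫ x, f x ∂μ ≤ ∫ x, f x ∂ν)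
    {A U : Set X} (hA : IsClosed A) (hAu : IsUpperSet A) (hU : IsOpen U) (hUu : IsUpperSet U)
    (hAU : A ⊆ U) : μ A ≤ ν U := by
  obtain ⟨f, hf, hmono, hf01, hfA, hfU⟩ :=
    hX.exists_continuous_monotone_one_zero hA hAu hU hUu hAU
  have hnn : 0 ≤ f := fun x => (hf01 x).1
  have hf1 : ∀ x, f x ≤ 1 := fun x => (hf01 x).2
  have hofReal (ρ : Measure X) [IsFiniteMeasure ρ] :
      ENNReal.ofReal (∫ x, f x ∂ρ) = ∫⁻ x, ENNReal.ofReal (f x) ∂ρ :=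
    ofReal_integral_eq_lintegral_ofReal (integrable_of_continuous_of_bound hf hnn hf1)
      (.of_forall hnn)
  calc μ A = ∫⁻ x, A.indicator 1 x ∂μ := (lintegral_indicator_one hA.measurableSet).symm
    _ ≤ ∫⁻ x, ENNReal.ofReal (f x) ∂μ := lintegral_mono fun x => by
        by_cases hx : x ∈ A
        · simp [hx, hfA hx]
        · simp [hx]
    _ = ENNReal.ofReal (∫ x, f x ∂μ) := (hofReal μ).symm
    _ ≤ ENNReal.ofReal (∫ x, f x ∂ν) := ENNReal.ofReal_le_ofReal (h f hf hmono hnn ⟨1, hf1⟩)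
    _ = ∫⁻ x, ENNReal.ofReal (f x) ∂ν := hofReal ν
    _ ≤ ∫⁻ x, U.indicator 1 x ∂ν := lintegral_mono fun x => by
        by_cases hx : x ∈ U
        · simpa [hx] using hf1 x
        · simp [hx, hfU hx]
    _ = ν U := lintegral_indicator_one hU.measurableSet

end StochasticOrder

theorem MeasureIsTight.measure_le_of_forall_isCompact_subset {X : Type*} [TopologicalSpace X]
    [MeasurableSpace X] {μ : Measure X} (hμ : MeasureIsTight μ) {A : Set X}
    (hA : MeasurableSet A) {c : ℝ≥0∞} (h : ∀ K ⊆ A, IsCompact K → μ K ≤ c) : μ A ≤ c := by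
  refine ENNReal.le_of_forall_pos_le_add fun ε hε _ => ?_
  obtain ⟨K, hKA, hK, hlt⟩ := hμ A hA ε (ENNReal.coe_pos.mpr hε)
  exact hlt.le.trans (add_le_add_left (h K hKA hK) _)

theorem stochasticOrder_iff_continuous_monotone_of_monotoneNormal_general {X : Type*}
    [MetricSpace X] [MeasurableSpace X] [BorelSpace X] [PartialOrder X]
    (hclosed : IsClosed {p : X × X | p.1 ≤ p.2})
    (hMN : ∀ A B : Set X, IsClosed A → IsUpperSet A → IsClosed B → IsLowerSet B → A ∩ B = ∅ →
      ∃ U V : Set X, IsOpen U ∧ IsUpperSet U ∧ A ⊆ U ∧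
        IsOpen V ∧ IsLowerSet V ∧ B ⊆ V ∧ U ∩ V = ∅)
    (μ ν : Measure X) [IsProbabilityMeasure μ] [IsProbabilityMeasure ν]
    (hμ : MeasureIsTight μ) :
    (∀ U : Set X, IsOpen U → IsUpperSet U → μ U ≤ ν U) ↔
      (∀ f : X → ℝ, Continuous f → Monotone f → (∀ x, 0 ≤ f x) →
        (∃ M : ℝ, ∀ x, f x ≤ M) → ∫ x, f x ∂μ ≤ ∫ x, f x ∂ν) := by
  have : OrderClosedTopology X := ⟨hclosed⟩
  refine ⟨fun h f hf hmono hnn ⟨M, hM⟩ =>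
    integral_le_integral_of_forall_isUpperSet h hf hmono hnn hM, fun h U hU hUu => ?_⟩
  refine hμ.measure_le_of_forall_isCompact_subset hU.measurableSet fun K hKU hK => ?_
  calc μ K ≤ μ (upperClosure K) := measure_mono subset_upperClosure
    _ ≤ ν U := measure_le_of_forall_integral_le hMN h hK.isClosed_upperClosure
      (upperClosure K).upper hU hUu (upperClosure_min hKU hUu)

/-- Let `(X,d)` be a metric space with a closed partial order which is monotone normal:
disjoint closed upper and lower sets can be separated by disjoint open upper and lower sets.
Then for tight Borel probability measures `μ, ν` on `X`, `μ ≤ ν` in the stochastic order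
if and only if `∫ f dμ ≤ ∫ f dν` for every continuous bounded monotone `f : X → [0,∞)`. -/
theorem stochasticOrder_iff_continuous_monotone_of_monotoneNormal {X : Type*}
    [MetricSpace X] [MeasurableSpace X] [BorelSpace X] [PartialOrder X]
    (hclosed : IsClosed {p : X × X | p.1 ≤ p.2})
    (hMN : ∀ A B : Set X, IsClosed A → IsUpperSet A → IsClosed B → IsLowerSet B → A ∩ B = ∅ →
      ∃ U V : Set X, IsOpen U ∧ IsUpperSet U ∧ A ⊆ U ∧
        IsOpen V ∧ IsLowerSet V ∧ B ⊆ V ∧ U ∩ V = ∅)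
    (μ ν : Measure X) [IsProbabilityMeasure μ] [IsProbabilityMeasure ν]
    (hμ : MeasureIsTight μ) (hν : MeasureIsTight ν) :
    (∀ U : Set X, IsOpen U → IsUpperSet U → μ U ≤ ν U) ↔
      (∀ f : X → ℝ, Continuous f → Monotone f → (∀ x, 0 ≤ f x) →
        (∃ M : ℝ, ∀ x, f x ≤ M) → ∫ x, f x ∂μ ≤ ∫ x, f x ∂ν) :=
  stochasticOrder_iff_continuous_monotone_of_monotoneNormal_general hclosed hMN μ ν hμ
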